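/- Every commutative post-Lie superalgebra structure ∘ on the super W(2,2) algebra SW is trivial, i.e. x ∘ y = 0 for all x, y ∈ SW. -/

import Mathlib

/-!
Write `ψ x = (x ∘ ·)`. The axioms say that each `ψ x` is a super-derivation and that `ψ [x, y]`
is the supercommutator of `ψ x` and `ψ y`; everything is read off in the basis, on which `ad L₀`
is diagonal.

`x ∘ C` commutes with all of SW, so it lies in the center `ℂC₁ + ℂC₂`. Hence `ψ C` is a
derivation with central values, vanishes on brackets, and so vanishes on the perfect algebra SW.
Comparing `G_{-1/2}`- and `Q_{-1/2}`-coordinates in the derivation rule for `x ∘ [L₀, G_{-1/2}]`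
shows that `L₀ ∘ x` has no `L₀`- and no `H₀`-component. Since the pairing sending `(u, v)` to the
`L₀`- and `H₀`-coordinates of `[u, v]` is nondegenerate modulo the center, `L₀ ∘ L₀` is central
and `ψ L₀` commutes with `ad L₀`. So `L₀ ∘ G_r` lies in the weight space `ℂG_r + ℂQ_r`, and
`[L₀ ∘ G_r, G_r] = 0` (from `G_r ∘ G_r = 0`) forces `L₀ ∘ G_r = 0`; likewise `L₀ ∘ Q_r = 0`.
SW is spanned by its odd part, the brackets `[G_{-1/2}, ·]` of odd elements and the center, so
`ψ L₀ = 0`. Finally `ψ [L₀, x] = [ψ L₀, ψ x] = 0` kills `ψ` on every vector of nonzero weight,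
and the same spanning argument gives `ψ = 0`.
-/

theorem Int.cast_ne_add_half {K : Type*} [Field K] [CharZero K] (a b : ℤ) :
    (a : K) ≠ b + 1 / 2 := by
  intro h
  have h2 : ((2 * a : ℤ) : K) = ((2 * b + 1 : ℤ) : K) := by push_cast; linear_combination 2 * h
  have := Int.cast_injective h2
  omega

theorem Module.Basis.repr_apply_eq_mul {ι R M : Type*} [CommSemiring R] [AddCommMonoid M]
    [Module R M] (b : Module.Basis ι R M) {f : M →ₗ[R] M} {j j' : ι} {c : R}
    (h : ∀ i, b.repr (f (b i)) j = c * b.repr (b i) j') (v : M) :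
    b.repr (f v) j = c * b.repr v j' := by
  have : b.coord j ∘ₗ f = c • b.coord j' := b.ext fun i => by simpa using h i
  simpa using LinearMap.congr_fun this v

theorem Module.Basis.repr_apply_of_apply_eq_smul {ι R M : Type*} [CommSemiring R]
    [AddCommMonoid M] [Module R M] (b : Module.Basis ι R M) {T : M →ₗ[R] M} {w : ι → R}
    (hT : ∀ i, T (b i) = w i • b i) (v : M) (j : ι) :
    b.repr (T v) j = w j * b.repr v j :=
  b.repr_apply_eq_mul (fun i => by by_cases h : i = j <;> simp [hT, h]) v

theorem Module.Basis.repr_eq_zero_of_apply_eq_smul {ι K M : Type*} [Field K] [AddCommGroup M]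
    [Module K M] (b : Module.Basis ι K M) {T : M →ₗ[K] M} {w : ι → K}
    (hT : ∀ i, T (b i) = w i • b i) {v : M} {c : K} (hv : T v = c • v) {j : ι} (hj : w j ≠ c) :
    b.repr v j = 0 := by
  have h := b.repr_apply_of_apply_eq_smul hT v j
  rw [hv, map_smul, Finsupp.smul_apply, smul_eq_mul] at h
  have : (w j - c) * b.repr v j = 0 := by linear_combination -h
  exact (mul_eq_zero.mp this).resolve_left (sub_ne_zero.mpr hj)

namespace SuperW22

abbrev Idx := ((ℤ ⊕ ℤ) ⊕ (Unit ⊕ Unit)) ⊕ (ℤ ⊕ ℤ)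

abbrev iL (m : ℤ) : Idx := Sum.inl (Sum.inl (Sum.inl m))
abbrev iH (m : ℤ) : Idx := Sum.inl (Sum.inl (Sum.inr m))
abbrev iC (c : Unit ⊕ Unit) : Idx := Sum.inl (Sum.inr c)
abbrev iC1 : Idx := iC (Sum.inl ())
abbrev iC2 : Idx := iC (Sum.inr ())
abbrev iG (k : ℤ) : Idx := Sum.inr (Sum.inl k)
abbrev iQ (k : ℤ) : Idx := Sum.inr (Sum.inr k)

def parity : Idx → ZMod 2
  | Sum.inl _ => 0
  | Sum.inr _ => 1

def superSign (p : ZMod 2) : ℂ := if p = 1 then -1 else 1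

-- `iG k` and `iQ k` index `G_{k+1/2}` and `Q_{k+1/2}`; `weight i` is the eigenvalue of `ad L₀`
-- on the basis vector `b i`.
noncomputable def weight : Idx → ℂ
  | Sum.inl (Sum.inl (Sum.inl m)) => -m
  | Sum.inl (Sum.inl (Sum.inr m)) => -m
  | Sum.inl (Sum.inr _) => 0
  | Sum.inr (Sum.inl k) => -(k + 1 / 2)
  | Sum.inr (Sum.inr k) => -(k + 1 / 2)

theorem weight_eq_weight_G_iff (j : Idx) (k : ℤ) :
    weight j = weight (iG k) ↔ j = iG k ∨ j = iQ k := by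
  rcases j with (((n | n) | c) | (s | s)) <;>
    simp only [weight, reduceCtorEq, Sum.inr.injEq, Sum.inl.injEq, false_or, or_false, neg_inj,
      add_left_inj, Int.cast_inj]
  · exact iff_of_false (Int.cast_ne_add_half n k) id
  · exact iff_of_false (Int.cast_ne_add_half n k) id
  · refine iff_of_false (fun h => Int.cast_ne_add_half (K := ℂ) 0 k ?_) id
    push_cast
    linear_combination -h

theorem weight_G_ne_zero (k : ℤ) : weight (iG k) ≠ 0 := fun h =>
  Int.cast_ne_add_half (K := ℂ) 0 k (by simp only [weight] at h; push_cast; linear_combination h)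

variable {V : Type*} [AddCommGroup V] [Module ℂ V]

def center (b : Module.Basis Idx ℂ V) : Submodule ℂ V := Submodule.span ℂ (b '' Set.range iC)

structure SWRelations (b : Module.Basis Idx ℂ V) (br : V →ₗ[ℂ] V →ₗ[ℂ] V) : Prop where
  L_L : ∀ m n : ℤ, br (b (iL m)) (b (iL n)) = ((m : ℂ) - n) • b (iL (m + n)) +
    (if m + n = 0 then ((m : ℂ) ^ 3 - m) / 12 else 0) • b iC1
  L_H : ∀ m n : ℤ, br (b (iL m)) (b (iH n)) = ((m : ℂ) - n) • b (iH (m + n)) +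
    (if m + n = 0 then ((m : ℂ) ^ 3 - m) / 12 else 0) • b iC2
  L_G : ∀ m k : ℤ, br (b (iL m)) (b (iG k)) = ((m : ℂ) / 2 - ((k : ℂ) + 1 / 2)) • b (iG (m + k))
  L_Q : ∀ m k : ℤ, br (b (iL m)) (b (iQ k)) = ((m : ℂ) / 2 - ((k : ℂ) + 1 / 2)) • b (iQ (m + k))
  G_G : ∀ k l : ℤ, br (b (iG k)) (b (iG l)) = (2 : ℂ) • b (iL (k + l + 1)) +
    (if k + l + 1 = 0 then (((k : ℂ) + 1 / 2) ^ 2 - 1 / 4) / 3 else 0) • b iC1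
  G_Q : ∀ k l : ℤ, br (b (iG k)) (b (iQ l)) = (2 : ℂ) • b (iH (k + l + 1)) +
    (if k + l + 1 = 0 then (((k : ℂ) + 1 / 2) ^ 2 - 1 / 4) / 3 else 0) • b iC2
  H_G : ∀ m k : ℤ, br (b (iH m)) (b (iG k)) = ((m : ℂ) / 2 - ((k : ℂ) + 1 / 2)) • b (iQ (m + k))
  bracket_C : ∀ (c : Unit ⊕ Unit) (x : V), br x (b (iC c)) = 0
  skew : ∀ i j, br (b i) (b j) = -superSign (parity i * parity j) • br (b j) (b i)

namespace SWRelations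

variable {b : Module.Basis Idx ℂ V} {br : V →ₗ[ℂ] V →ₗ[ℂ] V}

theorem C_bracket (hSW : SWRelations b br) (c : Unit ⊕ Unit) (x : V) :
    br (b (iC c)) x = 0 := by
  have : br (b (iC c)) = 0 := b.ext fun i => by
    simpa [hSW.bracket_C, parity, superSign] using hSW.skew (iC c) i
  simp [this]

theorem H_L (hSW : SWRelations b br) (m n : ℤ) :
    br (b (iH m)) (b (iL n)) = -br (b (iL n)) (b (iH m)) := by
  simpa [parity, superSign] using hSW.skew (iH m) (iL n)

theorem G_L (hSW : SWRelations b br) (k n : ℤ) :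
    br (b (iG k)) (b (iL n)) = -br (b (iL n)) (b (iG k)) := by
  simpa [parity, superSign] using hSW.skew (iG k) (iL n)

theorem Q_L (hSW : SWRelations b br) (k n : ℤ) :
    br (b (iQ k)) (b (iL n)) = -br (b (iL n)) (b (iQ k)) := by
  simpa [parity, superSign] using hSW.skew (iQ k) (iL n)

theorem Q_G (hSW : SWRelations b br) (k l : ℤ) :
    br (b (iQ k)) (b (iG l)) = br (b (iG l)) (b (iQ k)) := by
  simpa [parity, superSign] using hSW.skew (iQ k) (iG l)

theorem L0_bracket (hSW : SWRelations b br) (i : Idx) :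
    br (b (iL 0)) (b i) = weight i • b i := by
  rcases i with (((m | m) | c) | (k | k)) <;>
    simp [hSW.L_L, hSW.L_H, hSW.bracket_C, hSW.L_G, hSW.L_Q, weight]

theorem repr_L0_bracket (hSW : SWRelations b br) (v : V) (j : Idx) :
    b.repr (br (b (iL 0)) v) j = weight j * b.repr v j :=
  b.repr_apply_of_apply_eq_smul hSW.L0_bracket v j

theorem repr_eq_zero_of_L0_bracket (hSW : SWRelations b br) {v : V} {c : ℂ}
    (hv : br (b (iL 0)) v = c • v) {j : Idx} (hj : weight j ≠ c) : b.repr v j = 0 :=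
  b.repr_eq_zero_of_apply_eq_smul hSW.L0_bracket hv hj

theorem apply_eq_zero_of_apply_L0_bracket (hSW : SWRelations b br) {W : Type*}
    [AddCommGroup W] [Module ℂ W] (D : V →ₗ[ℂ] W) {i : Idx} (hi : weight i ≠ 0)
    (h : D (br (b (iL 0)) (b i)) = 0) : D (b i) = 0 := by
  rw [hSW.L0_bracket, map_smul] at h
  exact (smul_eq_zero.mp h).resolve_left hi

theorem G_neg_one_G (hSW : SWRelations b br) (m : ℤ) :
    br (b (iG (-1))) (b (iG m)) = (2 : ℂ) • b (iL m) := by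
  norm_num [hSW.G_G]

theorem G_neg_one_Q (hSW : SWRelations b br) (m : ℤ) :
    br (b (iG (-1))) (b (iQ m)) = (2 : ℂ) • b (iH m) := by
  norm_num [hSW.G_Q]

theorem repr_bracket_G (hSW : SWRelations b br) (u : V) (l m : ℤ) :
    b.repr (br u (b (iG l))) (iL m) = 2 * b.repr u (iG (m - l - 1)) ∧
      b.repr (br u (b (iG l))) (iH m) = 2 * b.repr u (iQ (m - l - 1)) := by
  constructor <;> refine b.repr_apply_eq_mul (f := br.flip (b (iG l))) (fun i => ?_) u <;>
    rcases i with (((s | s) | c) | (s | s)) <;>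
      simp only [LinearMap.flip_apply, hSW.L_G, hSW.H_G, hSW.C_bracket, hSW.G_G, hSW.Q_G,
        hSW.G_Q] <;>
      (try split_ifs) <;> simp [Finsupp.single_apply] <;> split_ifs <;> first | rfl | omega

theorem repr_bracket_G_neg_one (hSW : SWRelations b br) (u : V) :
    b.repr (br u (b (iG (-1)))) (iG (-1)) = 1 / 2 * b.repr u (iL 0) ∧
      b.repr (br u (b (iG (-1)))) (iQ (-1)) = 1 / 2 * b.repr u (iH 0) := by
  constructor <;> refine b.repr_apply_eq_mul (f := br.flip (b (iG (-1)))) (fun i => ?_) u <;>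
    rcases i with (((s | s) | c) | (s | s)) <;>
      simp only [LinearMap.flip_apply, hSW.L_G, hSW.H_G, hSW.C_bracket, hSW.G_G, hSW.Q_G,
        hSW.G_Q] <;>
      (try split_ifs) <;> simp [Finsupp.single_apply] <;> split_ifs <;> norm_num [*]

theorem repr_bracket_L (hSW : SWRelations b br) (u : V) (n : ℤ) :
    b.repr (br u (b (iL n))) (iL 0) = (-2 * n) * b.repr u (iL (-n)) ∧
      b.repr (br u (b (iL n))) (iH 0) = (-2 * n) * b.repr u (iH (-n)) := by
  constructor <;> refine b.repr_apply_eq_mul (f := br.flip (b (iL n))) (fun i => ?_) u <;>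
    rcases i with (((s | s) | c) | (s | s)) <;>
      simp only [LinearMap.flip_apply, hSW.L_L, hSW.H_L, hSW.L_H, hSW.C_bracket, hSW.G_L,
        hSW.L_G, hSW.Q_L, hSW.L_Q] <;>
      (try split_ifs) <;> simp [Finsupp.single_apply] <;>
      split_ifs <;> first | rfl | omega | (subst_vars; push_cast; ring)

theorem bracket_eq_zero_of_mem_center_left (hSW : SWRelations b br) {u : V} (hu : u ∈ center b)
    (w : V) : br u w = 0 := by
  have : center b ≤ LinearMap.ker (br.flip w) := Submodule.span_le.mpr <| by
    rintro _ ⟨_, ⟨c, rfl⟩, rfl⟩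
    exact hSW.C_bracket c w
  exact this hu

theorem bracket_eq_zero_of_mem_center_right (hSW : SWRelations b br) {u : V} (hu : u ∈ center b)
    (w : V) : br w u = 0 := by
  have : center b ≤ LinearMap.ker (br w) := Submodule.span_le.mpr <| by
    rintro _ ⟨_, ⟨c, rfl⟩, rfl⟩
    exact hSW.bracket_C c w
  exact this hu

theorem mem_center_of_repr_bracket (hSW : SWRelations b br) {u : V}
    (hL0 : b.repr u (iL 0) = 0) (hH0 : b.repr u (iH 0) = 0)
    (h : ∀ j, b.repr (br u (b j)) (iL 0) = 0 ∧ b.repr (br u (b j)) (iH 0) = 0) :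
    u ∈ center b := by
  rw [center, b.mem_span_image]
  intro j hj
  rw [Finset.mem_coe, Finsupp.mem_support_iff] at hj
  rcases j with (((n | n) | c) | (k | k))
  · refine absurd ?_ hj
    rcases eq_or_ne n 0 with rfl | hn
    · exact hL0
    · have := (h (iL (-n))).1
      rw [(hSW.repr_bracket_L u (-n)).1, neg_neg] at this
      simpa [hn] using this
  · refine absurd ?_ hj
    rcases eq_or_ne n 0 with rfl | hn
    · exact hH0
    · have := (h (iL (-n))).2
      rw [(hSW.repr_bracket_L u (-n)).2, neg_neg] at this
      simpa [hn] using this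
  · exact ⟨c, rfl⟩
  · refine absurd ?_ hj
    have := (h (iG (-k - 1))).1
    rw [(hSW.repr_bracket_G u _ 0).1, show 0 - (-k - 1) - 1 = k by ring] at this
    simpa using this
  · refine absurd ?_ hj
    have := (h (iG (-k - 1))).2
    rw [(hSW.repr_bracket_G u _ 0).2, show 0 - (-k - 1) - 1 = k by ring] at this
    simpa using this

theorem mem_center_of_bracket_eq_zero (hSW : SWRelations b br) {u : V}
    (h : ∀ j, br u (b j) = 0) : u ∈ center b := by
  refine hSW.mem_center_of_repr_bracket ?_ ?_ fun j => by simp [h j]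
  · simpa [h] using (hSW.repr_bracket_G_neg_one u).1
  · simpa [h] using (hSW.repr_bracket_G_neg_one u).2

theorem eq_zero_of_bracket_G_eq_zero (hSW : SWRelations b br) {u : V} {k : ℤ}
    (hu : br (b (iL 0)) u = weight (iG k) • u) (h : br u (b (iG k)) = 0) : u = 0 := by
  refine b.repr.map_eq_zero_iff.mp (Finsupp.ext fun j => ?_)
  by_cases hj : weight j = weight (iG k)
  · rcases (weight_eq_weight_G_iff j k).mp hj with rfl | rfl
    · simpa [h, show 2 * k + 1 - k - 1 = k by ring] using (hSW.repr_bracket_G u k (2 * k + 1)).1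
    · simpa [h, show 2 * k + 1 - k - 1 = k by ring] using (hSW.repr_bracket_G u k (2 * k + 1)).2
  · exact hSW.repr_eq_zero_of_L0_bracket hu hj

theorem eq_zero_of_odd_of_center (hSW : SWRelations b br) {W : Type*} [AddCommGroup W]
    [Module ℂ W] (D : V →ₗ[ℂ] W) (hG : ∀ k, D (b (iG k)) = 0) (hQ : ∀ k, D (b (iQ k)) = 0)
    (hC : ∀ c, D (b (iC c)) = 0) (hGG : ∀ m, D (br (b (iG (-1))) (b (iG m))) = 0)
    (hGQ : ∀ m, D (br (b (iG (-1))) (b (iQ m))) = 0) : D = 0 :=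
  b.ext fun i => by
    rcases i with (((m | m) | c) | (k | k))
    · simpa [hSW.G_neg_one_G] using hGG m
    · simpa [hSW.G_neg_one_Q] using hGQ m
    · simpa using hC c
    · simpa using hG k
    · simpa using hQ k

end SWRelations

structure IsCommPostLie (b : Module.Basis Idx ℂ V) (br circ : V →ₗ[ℂ] V →ₗ[ℂ] V) : Prop where
  comm : ∀ i j, circ (b i) (b j) = superSign (parity i * parity j) • circ (b j) (b i)
  bracket_circ : ∀ i j k, circ (br (b i) (b j)) (b k) =
    circ (b i) (circ (b j) (b k)) - superSign (parity i * parity j) • circ (b j) (circ (b i) (b k))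
  circ_bracket : ∀ i j k, circ (b i) (br (b j) (b k)) =
    br (circ (b i) (b j)) (b k) + superSign (parity i * parity j) • br (b j) (circ (b i) (b k))

namespace IsCommPostLie

variable {b : Module.Basis Idx ℂ V} {br circ : V →ₗ[ℂ] V →ₗ[ℂ] V}

theorem comm_of_even (hP : IsCommPostLie b br circ) {i : Idx} (hi : parity i = 0) (j : Idx) :
    circ (b i) (b j) = circ (b j) (b i) := by
  simpa [hi, superSign] using hP.comm i j

theorem G_circ_self (hP : IsCommPostLie b br circ) (k : ℤ) :
    circ (b (iG k)) (b (iG k)) = 0 := by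
  have h := hP.comm (iG k) (iG k)
  simp only [parity, superSign, mul_one, if_true, neg_smul, one_smul] at h
  linear_combination (norm := module) (1 / 2 : ℂ) • h

theorem circ_L0_bracket (hP : IsCommPostLie b br circ) (i j : Idx) :
    circ (b i) (br (b (iL 0)) (b j)) =
      br (circ (b (iL 0)) (b i)) (b j) + br (b (iL 0)) (circ (b i) (b j)) := by
  simpa [← hP.comm_of_even (i := iL 0) rfl i, parity, superSign] using
    hP.circ_bracket i (iL 0) j

theorem circ_C_mem_center (hP : IsCommPostLie b br circ) (hSW : SWRelations b br) (i : Idx)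
    (c : Unit ⊕ Unit) : circ (b i) (b (iC c)) ∈ center b :=
  hSW.mem_center_of_bracket_eq_zero fun j => by
    simpa [hSW.C_bracket] using (hP.circ_bracket i (iC c) j).symm

theorem C_circ_eq_zero (hP : IsCommPostLie b br circ) (hSW : SWRelations b br)
    (c : Unit ⊕ Unit) : circ (b (iC c)) = 0 := by
  have hbr : ∀ i j, circ (b (iC c)) (br (b i) (b j)) = 0 := fun i j => by
    rw [hP.circ_bracket, hP.comm_of_even rfl i, hP.comm_of_even rfl j,
      hSW.bracket_eq_zero_of_mem_center_left (hP.circ_C_mem_center hSW i c),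
      hSW.bracket_eq_zero_of_mem_center_right (hP.circ_C_mem_center hSW j c), smul_zero, add_zero]
  have hL0 : circ (b (iC c)) (b (iL 0)) = 0 := by
    simpa [hSW.G_neg_one_G] using hbr (iG (-1)) (iG 0)
  have hH0 : circ (b (iC c)) (b (iH 0)) = 0 := by
    simpa [hSW.G_neg_one_Q] using hbr (iG (-1)) (iQ 0)
  refine hSW.eq_zero_of_odd_of_center _ (fun k => ?_) (fun k => ?_) (fun c' => ?_)
    (fun m => hbr _ _) (fun m => hbr _ _)
  · exact hSW.apply_eq_zero_of_apply_L0_bracket _ (weight_G_ne_zero k) (hbr _ _)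
  · exact hSW.apply_eq_zero_of_apply_L0_bracket _ (weight_G_ne_zero k) (hbr _ _)
  · -- `[L₂, L₋₂] = 4L₀ + C₁/2` and `[L₂, H₋₂] = 4H₀ + C₂/2`
    rcases c' with ⟨⟩ | ⟨⟩
    · have h := hbr (iL 2) (iL (-2))
      norm_num [hSW.L_L, hL0] at h
      exact h
    · have h := hbr (iL 2) (iH (-2))
      norm_num [hSW.L_H, hH0] at h
      exact h

theorem repr_L0_circ_L0_H0 (hP : IsCommPostLie b br circ) (hSW : SWRelations b br) (i : Idx) :
    b.repr (circ (b (iL 0)) (b i)) (iL 0) = 0 ∧ b.repr (circ (b (iL 0)) (b i)) (iH 0) = 0 := by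
  have h := hP.circ_L0_bracket i (iG (-1))
  rw [hSW.L0_bracket, map_smul] at h
  constructor
  · have := congrArg (fun v => b.repr v (iG (-1))) h
    simpa [hSW.repr_L0_bracket, (hSW.repr_bracket_G_neg_one _).1] using this
  · have := congrArg (fun v => b.repr v (iQ (-1))) h
    simpa [hSW.repr_L0_bracket, (hSW.repr_bracket_G_neg_one _).2, weight] using this

theorem L0_circ_L0_mem_center (hP : IsCommPostLie b br circ) (hSW : SWRelations b br) :
    circ (b (iL 0)) (b (iL 0)) ∈ center b := by
  refine hSW.mem_center_of_repr_bracket (hP.repr_L0_circ_L0_H0 hSW (iL 0)).1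
    (hP.repr_L0_circ_L0_H0 hSW (iL 0)).2 fun j => ?_
  have h := hP.circ_L0_bracket (iL 0) j
  rw [hSW.L0_bracket, map_smul] at h
  have hj := hP.repr_L0_circ_L0_H0 hSW j
  constructor
  · have := congrArg (fun v => b.repr v (iL 0)) h
    simpa [hSW.repr_L0_bracket, hj.1, weight] using this.symm
  · have := congrArg (fun v => b.repr v (iH 0)) h
    simpa [hSW.repr_L0_bracket, hj.2, weight] using this.symm

theorem L0_bracket_L0_circ (hP : IsCommPostLie b br circ) (hSW : SWRelations b br) (i : Idx) :
    br (b (iL 0)) (circ (b (iL 0)) (b i)) = weight i • circ (b (iL 0)) (b i) := by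
  have h := hP.circ_L0_bracket (iL 0) i
  rwa [hSW.bracket_eq_zero_of_mem_center_left (hP.L0_circ_L0_mem_center hSW), zero_add,
    hSW.L0_bracket, map_smul, eq_comm] at h

theorem L0_circ_G_eq_zero (hP : IsCommPostLie b br circ) (hSW : SWRelations b br) (k : ℤ) :
    circ (b (iL 0)) (b (iG k)) = 0 := by
  refine hSW.eq_zero_of_bracket_G_eq_zero (hP.L0_bracket_L0_circ hSW (iG k)) ?_
  have h := hP.circ_L0_bracket (iG k) (iG k)
  rw [hSW.L0_bracket, map_smul, hP.G_circ_self, smul_zero, map_zero, add_zero] at h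
  exact h.symm

theorem L0_circ_Q_eq_zero (hP : IsCommPostLie b br circ) (hSW : SWRelations b br) (k : ℤ) :
    circ (b (iL 0)) (b (iQ k)) = 0 := by
  refine hSW.eq_zero_of_bracket_G_eq_zero (k := k) (hP.L0_bracket_L0_circ hSW (iQ k)) ?_
  have hGQ := hP.circ_L0_bracket (iG k) (iQ k)
  have hQG := hP.circ_L0_bracket (iQ k) (iG k)
  have hcomm : circ (b (iQ k)) (b (iG k)) = -circ (b (iG k)) (b (iQ k)) := by
    simpa [parity, superSign] using hP.comm (iQ k) (iG k)
  rw [hP.L0_circ_G_eq_zero hSW, map_zero, LinearMap.zero_apply, zero_add, hSW.L0_bracket, map_smul]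
    at hGQ
  change weight (iG k) • _ = _ at hGQ
  rw [hSW.L0_bracket, map_smul, hcomm, smul_neg, map_neg, ← hGQ] at hQG
  simpa using hQG

theorem L0_circ_eq_zero (hP : IsCommPostLie b br circ) (hSW : SWRelations b br) :
    circ (b (iL 0)) = 0 :=
  hSW.eq_zero_of_odd_of_center _ (hP.L0_circ_G_eq_zero hSW) (hP.L0_circ_Q_eq_zero hSW)
    (fun c => by rw [hP.comm_of_even rfl, hP.C_circ_eq_zero hSW, LinearMap.zero_apply])
    (fun m => by simp [hP.circ_bracket, hP.L0_circ_G_eq_zero hSW])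
    (fun m => by simp [hP.circ_bracket, hP.L0_circ_G_eq_zero hSW, hP.L0_circ_Q_eq_zero hSW])

theorem circ_eq_zero (hP : IsCommPostLie b br circ) (hSW : SWRelations b br) : circ = 0 := by
  have hweight : ∀ i, weight i ≠ 0 → circ (b i) = 0 := fun i hi =>
    hSW.apply_eq_zero_of_apply_L0_bracket circ hi <| b.ext fun k => by
      simpa [hP.L0_circ_eq_zero hSW] using hP.bracket_circ (iL 0) i k
  have hG k : circ (b (iG k)) = 0 := hweight _ (weight_G_ne_zero k)
  have hQ k : circ (b (iQ k)) = 0 := hweight _ (weight_G_ne_zero k)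
  exact hSW.eq_zero_of_odd_of_center circ hG hQ (hP.C_circ_eq_zero hSW)
    (fun m => b.ext fun k => by simp [hP.bracket_circ, hG])
    (fun m => b.ext fun k => by simp [hP.bracket_circ, hG, hQ])

end IsCommPostLie

end SuperW22

open SuperW22

theorem postLie_SW_trivial_general
    (V : Type) [AddCommGroup V] [Module ℂ V]
    (bV : Module.Basis (((ℤ ⊕ ℤ) ⊕ (Unit ⊕ Unit)) ⊕ (ℤ ⊕ ℤ)) ℂ V)
    (br : V →ₗ[ℂ] V →ₗ[ℂ] V)
    (L : ℤ → V) (H : ℤ → V) (C1 : V) (C2 : V) (G : ℤ → V) (Q : ℤ → V)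
    (hLdef : ∀ m : ℤ, L m = bV (Sum.inl (Sum.inl (Sum.inl m))))
    (hHdef : ∀ m : ℤ, H m = bV (Sum.inl (Sum.inl (Sum.inr m))))
    (hC1def : C1 = bV (Sum.inl (Sum.inr (Sum.inl ()))))
    (hC2def : C2 = bV (Sum.inl (Sum.inr (Sum.inr ()))))
    (hGdef : ∀ k : ℤ, G k = bV (Sum.inr (Sum.inl k)))
    (hQdef : ∀ k : ℤ, Q k = bV (Sum.inr (Sum.inr k)))
    (Vsub : ZMod 2 → Submodule ℂ V)
    (hV0 : Vsub 0 = Submodule.span ℂ (Set.range (fun i : (ℤ ⊕ ℤ) ⊕ (Unit ⊕ Unit) => bV (Sum.inl i))))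
    (hV1 : Vsub 1 = Submodule.span ℂ (Set.range (fun j : ℤ ⊕ ℤ => bV (Sum.inr j))))
    (sgn : ZMod 2 → ℂ) (hsgn : ∀ p : ZMod 2, sgn p = if p = 1 then -1 else 1)
    (hLL : ∀ m n : ℤ, br (L m) (L n) = ((m : ℂ) - n) • L (m + n) +
      (if m + n = 0 then ((m : ℂ) ^ 3 - m) / 12 else 0) • C1)
    (hLH : ∀ m n : ℤ, br (L m) (H n) = ((m : ℂ) - n) • H (m + n) +
      (if m + n = 0 then ((m : ℂ) ^ 3 - m) / 12 else 0) • C2)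
    (hLG : ∀ m k : ℤ, br (L m) (G k) = ((m : ℂ) / 2 - ((k : ℂ) + 1 / 2)) • G (m + k))
    (hLQ : ∀ m k : ℤ, br (L m) (Q k) = ((m : ℂ) / 2 - ((k : ℂ) + 1 / 2)) • Q (m + k))
    (hGG : ∀ k l : ℤ, br (G k) (G l) = (2 : ℂ) • L (k + l + 1) +
      (if k + l + 1 = 0 then (((k : ℂ) + 1 / 2) ^ 2 - 1 / 4) / 3 else 0) • C1)
    (hGQ : ∀ k l : ℤ, br (G k) (Q l) = (2 : ℂ) • H (k + l + 1) +
      (if k + l + 1 = 0 then (((k : ℂ) + 1 / 2) ^ 2 - 1 / 4) / 3 else 0) • C2)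
    (hHG : ∀ m k : ℤ, br (H m) (G k) = ((m : ℂ) / 2 - ((k : ℂ) + 1 / 2)) • Q (m + k))
    (hxC1 : ∀ x : V, br x C1 = 0)
    (hxC2 : ∀ x : V, br x C2 = 0)
    (hskew : ∀ p q : ZMod 2, ∀ x ∈ Vsub p, ∀ y ∈ Vsub q,
      br x y = (-(sgn (p * q))) • br y x)
    (circ : V →ₗ[ℂ] V →ₗ[ℂ] V)
    (hcomm : ∀ p q : ZMod 2, ∀ x ∈ Vsub p, ∀ y ∈ Vsub q, circ x y = sgn (p * q) • circ y x)
    (hpost1 : ∀ p q t : ZMod 2, ∀ x ∈ Vsub p, ∀ y ∈ Vsub q, ∀ z ∈ Vsub t,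
      circ (br x y) z = circ x (circ y z) - sgn (p * q) • circ y (circ x z))
    (hpost2 : ∀ p q t : ZMod 2, ∀ x ∈ Vsub p, ∀ y ∈ Vsub q, ∀ z ∈ Vsub t,
      circ x (br y z) = br (circ x y) z + sgn (p * q) • br y (circ x z)) :
    ∀ x y : V, circ x y = 0 := by
  obtain rfl : L = fun m => bV (iL m) := funext hLdef
  obtain rfl : H = fun m => bV (iH m) := funext hHdef
  obtain rfl : G = fun k => bV (iG k) := funext hGdef
  obtain rfl : Q = fun k => bV (iQ k) := funext hQdef
  obtain rfl : sgn = superSign := funext hsgn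
  subst hC1def hC2def
  have mem : ∀ i, bV i ∈ Vsub (parity i) := by
    rintro (i | j)
    · exact hV0 ▸ Submodule.subset_span ⟨i, rfl⟩
    · exact hV1 ▸ Submodule.subset_span ⟨j, rfl⟩
  have hSW : SWRelations bV br :=
    ⟨hLL, hLH, hLG, hLQ, hGG, hGQ, hHG, by rintro (⟨⟩ | ⟨⟩); exacts [hxC1, hxC2],
      fun i j => hskew _ _ _ (mem i) _ (mem j)⟩
  have hP : IsCommPostLie bV br circ :=
    ⟨fun i j => hcomm _ _ _ (mem i) _ (mem j),
      fun i j k => hpost1 _ _ _ _ (mem i) _ (mem j) _ (mem k),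
      fun i j k => hpost2 _ _ _ _ (mem i) _ (mem j) _ (mem k)⟩
  simp [hP.circ_eq_zero hSW]

theorem postLie_SW_trivial
    (V : Type) [AddCommGroup V] [Module ℂ V]
    (bV : Module.Basis (((ℤ ⊕ ℤ) ⊕ (Unit ⊕ Unit)) ⊕ (ℤ ⊕ ℤ)) ℂ V)
    (br : V →ₗ[ℂ] V →ₗ[ℂ] V)
    (L : ℤ → V) (H : ℤ → V) (C1 : V) (C2 : V) (G : ℤ → V) (Q : ℤ → V)
    (hLdef : ∀ m : ℤ, L m = bV (Sum.inl (Sum.inl (Sum.inl m))))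
    (hHdef : ∀ m : ℤ, H m = bV (Sum.inl (Sum.inl (Sum.inr m))))
    (hC1def : C1 = bV (Sum.inl (Sum.inr (Sum.inl ()))))
    (hC2def : C2 = bV (Sum.inl (Sum.inr (Sum.inr ()))))
    (hGdef : ∀ k : ℤ, G k = bV (Sum.inr (Sum.inl k)))
    (hQdef : ∀ k : ℤ, Q k = bV (Sum.inr (Sum.inr k)))
    (Vsub : ZMod 2 → Submodule ℂ V)
    (hV0 : Vsub 0 = Submodule.span ℂ (Set.range (fun i : (ℤ ⊕ ℤ) ⊕ (Unit ⊕ Unit) => bV (Sum.inl i))))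
    (hV1 : Vsub 1 = Submodule.span ℂ (Set.range (fun j : ℤ ⊕ ℤ => bV (Sum.inr j))))
    (sgn : ZMod 2 → ℂ) (hsgn : ∀ p : ZMod 2, sgn p = if p = 1 then -1 else 1)
    (hLL : ∀ m n : ℤ, br (L m) (L n) = ((m : ℂ) - n) • L (m + n) +
      (if m + n = 0 then ((m : ℂ) ^ 3 - m) / 12 else 0) • C1)
    (hLH : ∀ m n : ℤ, br (L m) (H n) = ((m : ℂ) - n) • H (m + n) +
      (if m + n = 0 then ((m : ℂ) ^ 3 - m) / 12 else 0) • C2)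
    (hLG : ∀ m k : ℤ, br (L m) (G k) = ((m : ℂ) / 2 - ((k : ℂ) + 1 / 2)) • G (m + k))
    (hLQ : ∀ m k : ℤ, br (L m) (Q k) = ((m : ℂ) / 2 - ((k : ℂ) + 1 / 2)) • Q (m + k))
    (hGG : ∀ k l : ℤ, br (G k) (G l) = (2 : ℂ) • L (k + l + 1) +
      (if k + l + 1 = 0 then (((k : ℂ) + 1 / 2) ^ 2 - 1 / 4) / 3 else 0) • C1)
    (hGQ : ∀ k l : ℤ, br (G k) (Q l) = (2 : ℂ) • H (k + l + 1) +
      (if k + l + 1 = 0 then (((k : ℂ) + 1 / 2) ^ 2 - 1 / 4) / 3 else 0) • C2)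
    (hHG : ∀ m k : ℤ, br (H m) (G k) = ((m : ℂ) / 2 - ((k : ℂ) + 1 / 2)) • Q (m + k))
    (hHH : ∀ m n : ℤ, br (H m) (H n) = 0)
    (hHQ : ∀ m k : ℤ, br (H m) (Q k) = 0)
    (hQQ : ∀ k l : ℤ, br (Q k) (Q l) = 0)
    (hxC1 : ∀ x : V, br x C1 = 0)
    (hxC2 : ∀ x : V, br x C2 = 0)
    (hskew : ∀ p q : ZMod 2, ∀ x ∈ Vsub p, ∀ y ∈ Vsub q,
      br x y = (-(sgn (p * q))) • br y x)
    (circ : V →ₗ[ℂ] V →ₗ[ℂ] V)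
    (hcomm : ∀ p q : ZMod 2, ∀ x ∈ Vsub p, ∀ y ∈ Vsub q, circ x y = sgn (p * q) • circ y x)
    (hpost1 : ∀ p q t : ZMod 2, ∀ x ∈ Vsub p, ∀ y ∈ Vsub q, ∀ z ∈ Vsub t,
      circ (br x y) z = circ x (circ y z) - sgn (p * q) • circ y (circ x z))
    (hpost2 : ∀ p q t : ZMod 2, ∀ x ∈ Vsub p, ∀ y ∈ Vsub q, ∀ z ∈ Vsub t,
      circ x (br y z) = br (circ x y) z + sgn (p * q) • br y (circ x z)) :
    ∀ x y : V, circ x y = 0 :=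
  postLie_SW_trivial_general V bV br L H C1 C2 G Q hLdef hHdef hC1def hC2def hGdef hQdef Vsub hV0
    hV1 sgn hsgn hLL hLH hLG hLQ hGG hGQ hHG hxC1 hxC2 hskew circ hcomm hpost1 hpost2
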